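/- Fix acyclic signatures σ and σ* of a connected finite graph G. For any two distinct spanning trees T₁ and T₂, there exists an edge e in the symmetric difference T₁ △ T₂ such that the orientations g_{σ,σ*}(T₁) and g_{σ,σ*}(T₂) assign opposite directions to e. In particular, the map g_{σ,σ*} from spanning trees to orientations is injective. -/

import Mathlib

open Function

namespace GB

structure Graph where
  V : Type
  E : Type
  [fV : Fintype V]
  [fE : Fintype E]
  [dV : DecidableEq V]
  [dE : DecidableEq E]
  tail : E → V
  head : E → V

attribute [instance] Graph.fV Graph.fE Graph.dV Graph.dE

variable (G : Graph)

/-- Incidence matrix with respect to the reference orientation. -/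
def incMat : Matrix G.V G.E ℝ := fun v e =>
  (if G.head e = v then 1 else 0) - (if G.tail e = v then 1 else 0)

/-- The incidence linear map. -/
noncomputable def DMap : (G.E → ℝ) →ₗ[ℝ] (G.V → ℝ) := (incMat G).mulVecLin

/-- Cycle space: kernel of the incidence matrix (equal to ker of D with a row removed). -/
noncomputable def cycleSpace : Submodule ℝ (G.E → ℝ) := LinearMap.ker (DMap G)

/-- Cocycle space: row space of the incidence matrix (= im(D^T) for connected G). -/
noncomputable def cocycleSpace : Submodule ℝ (G.E → ℝ) :=
  LinearMap.range ((incMat G).transpose.mulVecLin)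

def Connected : Prop :=
  ∀ f : G.V → ℝ, (∀ e, f (G.head e) = f (G.tail e)) → ∀ v w, f v = f w

/-- a {0,±1}-vector -/
def IsZPM (x : G.E → ℝ) : Prop := ∀ e, x e = 0 ∨ x e = 1 ∨ x e = -1

/-- A directed cycle, identified with a support-minimal nonzero {0,±1}-vector of the
cycle space (a signed circuit of the graphic matroid). -/
def IsDirCycle (x : G.E → ℝ) : Prop :=
  x ∈ cycleSpace G ∧ x ≠ 0 ∧ IsZPM G x ∧
    ∀ y ∈ cycleSpace G, y ≠ 0 → support y ⊆ support x → support y = support x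

/-- A directed cocycle (signed cocircuit). -/
def IsDirCocycle (x : G.E → ℝ) : Prop :=
  x ∈ cocycleSpace G ∧ x ≠ 0 ∧ IsZPM G x ∧
    ∀ y ∈ cocycleSpace G, y ≠ 0 → support y ⊆ support x → support y = support x

def IsCycle (C : Set G.E) : Prop := ∃ x, IsDirCycle G x ∧ support x = C
def IsCocycle (C : Set G.E) : Prop := ∃ x, IsDirCocycle G x ∧ support x = C

/-- Orientations are identified with {0,1}-vectors, (1,…,1) being the reference orientation. -/
def IsOrientation (O : G.E → ℝ) : Prop := ∀ e, O e = 0 ∨ O e = 1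

/-- the ±1 direction of edge e in orientation O -/
def dir (O : G.E → ℝ) (e : G.E) : ℝ := 2 * O e - 1

/-- the signed vector x (e.g. a directed cycle or partial orientation) is contained in O -/
def InOrient (x O : G.E → ℝ) : Prop := ∀ e, x e = 0 ∨ x e = dir G O e

def IsIntVec (x : G.E → ℝ) : Prop := ∀ e, ∃ n : ℤ, x e = (n : ℝ)

/-- x is a sum of pairwise edge-disjoint directed cycles -/
def SumDisjDirCycles (x : G.E → ℝ) : Prop :=
  ∃ (n : ℕ) (c : Fin n → (G.E → ℝ)), (∀ i, IsDirCycle G (c i)) ∧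
    (∀ i j, i ≠ j → Disjoint (support (c i)) (support (c j))) ∧ x = ∑ i, c i

/-- x is a sum of pairwise edge-disjoint directed cocycles -/
def SumDisjDirCocycles (x : G.E → ℝ) : Prop :=
  ∃ (n : ℕ) (c : Fin n → (G.E → ℝ)), (∀ i, IsDirCocycle G (c i)) ∧
    (∀ i j, i ≠ j → Disjoint (support (c i)) (support (c j))) ∧ x = ∑ i, c i

/-- A cycle signature: a choice of direction for each cycle. -/
structure CycSig (G : Graph) where
  s : Set G.E → (G.E → ℝ)
  mem : ∀ C, IsCycle G C → IsDirCycle G (s C) ∧ support (s C) = C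

/-- A cocycle signature. -/
structure CocycSig (G : Graph) where
  s : Set G.E → (G.E → ℝ)
  mem : ∀ C, IsCocycle G C → IsDirCocycle G (s C) ∧ support (s C) = C

open Classical in
/-- σ is acyclic: no nontrivial nonnegative combination of the σ(C) vanishes. -/
noncomputable def AcyclicSig (σ : CycSig G) : Prop :=
  ∀ a : Set G.E → ℝ, (∀ C, 0 ≤ a C) →
    ∑ C ∈ Finset.univ.filter (fun C => IsCycle G C), a C • σ.s C = 0 →
    ∀ C, IsCycle G C → a C = 0

open Classical in
noncomputable def AcyclicCosig (σ : CocycSig G) : Prop :=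
  ∀ a : Set G.E → ℝ, (∀ C, 0 ≤ a C) →
    ∑ C ∈ Finset.univ.filter (fun C => IsCocycle G C), a C • σ.s C = 0 →
    ∀ C, IsCocycle G C → a C = 0

/-- O is σ-compatible: every directed cycle in O is the chosen one. -/
def SigCompatible (σ : CycSig G) (O : G.E → ℝ) : Prop :=
  ∀ x, IsDirCycle G x → InOrient G x O → x = σ.s (support x)

def CosigCompatible (σ : CocycSig G) (O : G.E → ℝ) : Prop :=
  ∀ x, IsDirCocycle G x → InOrient G x O → x = σ.s (support x)

def Compatible (σc : CycSig G) (σs : CocycSig G) (O : G.E → ℝ) : Prop :=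
  SigCompatible G σc O ∧ CosigCompatible G σs O

/-- one step of cycle reversal -/
def CycRev (O O' : G.E → ℝ) : Prop :=
  ∃ x, IsDirCycle G x ∧ InOrient G x O ∧ O' = O - x

/-- cycle reversal equivalence -/
def SameCycClass : (G.E → ℝ) → (G.E → ℝ) → Prop := Relation.EqvGen (CycRev G)

/-- one step of cycle or cocycle reversal -/
def CCRev (O O' : G.E → ℝ) : Prop :=
  ∃ x, (IsDirCycle G x ∨ IsDirCocycle G x) ∧ InOrient G x O ∧ O' = O - x

/-- cycle-cocycle reversal equivalence -/
def SameCCClass : (G.E → ℝ) → (G.E → ℝ) → Prop := Relation.EqvGen (CCRev G)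

/-- x is the directed fundamental cycle of e ∉ T, directed along the reference arc of e -/
def FundCycle (T : Finset G.E) (e : G.E) (x : G.E → ℝ) : Prop :=
  IsDirCycle G x ∧ x e = 1 ∧ support x ⊆ insert e (↑T : Set G.E)

/-- x is the directed fundamental cocycle of e ∈ T -/
def FundCocycle (T : Finset G.E) (e : G.E) (x : G.E → ℝ) : Prop :=
  IsDirCocycle G x ∧ x e = 1 ∧ support x ⊆ insert e ((↑T : Set G.E)ᶜ)

/-- T is a spanning tree: it contains no cycle and its complement contains no cocycle. -/
def IsSpanningTree (T : Finset G.E) : Prop :=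
  (∀ x, IsDirCycle G x → ¬ support x ⊆ (↑T : Set G.E)) ∧
  (∀ x, IsDirCocycle G x → ¬ support x ⊆ ((↑T : Set G.E)ᶜ))

/-- O = g_{σ,σ*}(T): each e ∉ T is oriented along σ(C(T,e)), each e ∈ T along σ*(C*(T,e)). -/
def GOrient (σc : CycSig G) (σs : CocycSig G) (T : Finset G.E) (O : G.E → ℝ) : Prop :=
  IsOrientation G O ∧
  (∀ e ∉ T, ∀ x, FundCycle G T e x → dir G O e = σc.s (support x) e) ∧
  (∀ e ∈ T, ∀ x, FundCocycle G T e x → dir G O e = σs.s (support x) e)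

/-- φ_{σ,σ*}(O) = S : O is obtained from the compatible orientation O^cp = g(T) by reversing
disjoint directed cycles c i and cocycles d j, and S = T ∪ (⊎ C_i) \ (⊎ C*_j). -/
def PhiRel (σc : CycSig G) (σs : CocycSig G) (O : G.E → ℝ) (S : Set G.E) : Prop :=
  ∃ (T : Finset G.E) (Ocp : G.E → ℝ) (n m : ℕ)
    (c : Fin n → (G.E → ℝ)) (d : Fin m → (G.E → ℝ)),
    IsSpanningTree G T ∧ Compatible G σc σs Ocp ∧ GOrient G σc σs T Ocp ∧
    (∀ i, IsDirCycle G (c i) ∧ InOrient G (c i) Ocp) ∧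
    (∀ j, IsDirCocycle G (d j) ∧ InOrient G (d j) Ocp) ∧
    (∀ i j, i ≠ j → Disjoint (support (c i)) (support (c j))) ∧
    (∀ i j, i ≠ j → Disjoint (support (d i)) (support (d j))) ∧
    (∀ i j, Disjoint (support (c i)) (support (d j))) ∧
    O = Ocp - (∑ i, c i) - (∑ j, d j) ∧
    S = ((↑T : Set G.E) ∪ (⋃ i, support (c i))) \ (⋃ j, support (d j))


/-- the cube of continuous orientations -/
def cube : Set (G.E → ℝ) := {x | ∀ e, 0 ≤ x e ∧ x e ≤ 1}

/-- x is a σ-compatible continuous orientation -/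
def ContSigCompat (σ : CycSig G) (x : G.E → ℝ) : Prop :=
  x ∈ cube G ∧ ∀ ε : ℝ, 0 < ε → ∀ C, IsCycle G C → x + ε • σ.s C ∉ cube G

/-- S̃_σ = S_σ + (im(D^T) ∩ ℤ^E) -/
def Stilde (σ : CycSig G) : Set (G.E → ℝ) :=
  {x | ∃ s, ContSigCompat G σ s ∧ ∃ v, v ∈ cocycleSpace G ∧ IsIntVec G v ∧ x = s + v}

end GB

/-! By Gordan's alternative, acyclicity of `σ` gives a linear functional `a` that is positive on
every `σ(C)`, and acyclicity of `σ*` one, `b`, positive on every `σ*(C*)`. Each fundamental cycle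
and cocycle is the chosen (co)cycle up to the sign of its edge in the orientation `g(T)`. So if
`g(T₁)` and `g(T₂)` agreed on `T₁ △ T₂`, then for `e ∈ T₂ \ T₁` the numbers `a(C(T₁, e))` and
`b(C*(T₂, e))` would have the same sign, and symmetrically for `e ∈ T₁ \ T₂`: the sum of all these
products would be positive. But it vanishes: expanding the fundamental cocycles of `T₂` in those
of `T₁`, and the fundamental cycles of `T₂` in those of `T₁`, turns its two halves into the same
double sum over `(T₂ \ T₁) × (T₁ \ T₂)` with opposite signs, because cycles are orthogonal to
cocycles. -/

open Matrix

namespace GB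

section SignedCircuits

variable {E : Type*} {W W' : Submodule ℝ (E → ℝ)} {A : Set E} {x : E → ℝ} {e f : E}

def IsSignVector (x : E → ℝ) : Prop := ∀ e, x e = 0 ∨ x e = 1 ∨ x e = -1

/-- `IsDirCycle G` and `IsDirCocycle G` are `IsSignedCircuit (cycleSpace G)` and
`IsSignedCircuit (cocycleSpace G)`. -/
def IsSignedCircuit (W : Submodule ℝ (E → ℝ)) (x : E → ℝ) : Prop :=
  x ∈ W ∧ x ≠ 0 ∧ IsSignVector x ∧
    ∀ y ∈ W, y ≠ 0 → support y ⊆ support x → support y = support x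

def HasSignVectorsBelow (W : Submodule ℝ (E → ℝ)) : Prop :=
  ∀ x ∈ W, x ≠ 0 → ∃ c ∈ W, c ≠ 0 ∧ IsSignVector c ∧ support c ⊆ support x

lemma IsSignedCircuit.neg (h : IsSignedCircuit W x) : IsSignedCircuit W (-x) := by
  obtain ⟨hW, h0, hsign, hmin⟩ := h
  refine ⟨neg_mem hW, neg_ne_zero.mpr h0, fun e => ?_, ?_⟩
  · rcases hsign e with h | h | h <;> simp [h]
  · simpa only [support_neg] using hmin

lemma apply_eq_zero_of_support_subset_insert (hx : support x ⊆ insert e A) {g : E}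
    (hge : g ≠ e) (hgA : g ∉ A) : x g = 0 :=
  notMem_support.mp fun hg => (hx hg).elim hge hgA

lemma eq_sum_smul_of_support_subset (hA : ∀ x ∈ W, support x ⊆ A → x = 0) {D : Finset E}
    {b : E → E → ℝ} (hb : ∀ e ∈ D, b e ∈ W ∧ b e e = 1 ∧ support (b e) ⊆ insert e A)
    (hx : x ∈ W) (hxD : support x ⊆ ↑D ∪ A) : x = ∑ e ∈ D, x e • b e := by
  classical
  refine sub_eq_zero.mp (hA _ (sub_mem hx (sum_mem fun e he => W.smul_mem _ (hb e he).1)) ?_)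
  intro g hg
  by_contra hgA
  refine hg ?_
  have hbg : ∀ e ∈ D, x e * b e g = if e = g then x g else 0 := by
    intro e he
    split_ifs with heg
    · rw [heg, (hb g (heg ▸ he)).2.1, mul_one]
    · rw [apply_eq_zero_of_support_subset_insert (hb e he).2.2 (Ne.symm heg) hgA, mul_zero]
  simp only [Pi.sub_apply, Finset.sum_apply, Pi.smul_apply, smul_eq_mul, Finset.sum_congr rfl hbg,
    Finset.sum_ite_eq']
  split_ifs with hgD
  · exact sub_self _
  · rw [notMem_support.mp fun h => (hxD h).elim hgD hgA, sub_zero]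

lemma eq_apply_smul_of_support_subset_insert (hA : ∀ x ∈ W, support x ⊆ A → x = 0)
    {z : E → ℝ} (hz : z ∈ W) (hze : z e = 1) (hzA : support z ⊆ insert e A) (hx : x ∈ W)
    (hxA : support x ⊆ insert e A) : x = x e • z := by
  classical
  have h := eq_sum_smul_of_support_subset hA (D := {e}) (b := fun _ => z)
    (fun g hg => by rw [Finset.mem_singleton.mp hg]; exact ⟨hz, hze, hzA⟩) hx
    (by rwa [Finset.coe_singleton, ← Set.insert_eq])
  rwa [Finset.sum_singleton] at h

variable [Fintype E]

lemma exists_isSignedCircuit_support_subset (hW : HasSignVectorsBelow W) (hx : x ∈ W)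
    (hx0 : x ≠ 0) : ∃ c, IsSignedCircuit W c ∧ support c ⊆ support x := by
  obtain ⟨_, hSx, ⟨y, hyW, hy0, rfl⟩, hmin⟩ := exists_minimal_le_of_wellFoundedLT
    (fun S : Set E => ∃ y ∈ W, y ≠ 0 ∧ support y = S) (support x) ⟨x, hx, hx0, rfl⟩
  obtain ⟨c, hcW, hc0, hsign, hcy⟩ := hW y hyW hy0
  have hc : support c = support y := hcy.antisymm (hmin ⟨c, hcW, hc0, rfl⟩ hcy)
  refine ⟨c, ⟨hcW, hc0, hsign, fun z hzW hz0 hzc => ?_⟩, hc ▸ hSx⟩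
  rw [hc] at hzc ⊢
  exact hzc.antisymm (hmin ⟨z, hzW, hz0, rfl⟩ hzc)

lemma eq_zero_of_support_subset (hW : HasSignVectorsBelow W)
    (hA : ∀ c, IsSignedCircuit W c → ¬ support c ⊆ A) (hx : x ∈ W) (hxA : support x ⊆ A) :
    x = 0 := by
  by_contra hx0
  obtain ⟨c, hc, hcx⟩ := exists_isSignedCircuit_support_subset hW hx hx0
  exact hA c hc (hcx.trans hxA)

lemma exists_isSignedCircuit_apply_eq_one (hW : HasSignVectorsBelow W)
    (hA : ∀ c, IsSignedCircuit W c → ¬ support c ⊆ A) (hx : x ∈ W) (hxe : x e ≠ 0)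
    (hxA : support x ⊆ insert e A) :
    ∃ c, IsSignedCircuit W c ∧ c e = 1 ∧ support c ⊆ insert e A := by
  obtain ⟨c, hc, hcx⟩ :=
    exists_isSignedCircuit_support_subset hW hx fun h => hxe (congrFun h e)
  have hcA : support c ⊆ insert e A := hcx.trans hxA
  have hce : c e ≠ 0 := fun hce =>
    hA c hc fun g hg => (hcA hg).resolve_left fun hge => hg (hge ▸ hce)
  rcases hc.2.2.1 e with h | h | h
  · exact absurd h hce
  · exact ⟨c, hc, h, hcA⟩
  · exact ⟨-c, hc.neg, by simp [h], by rwa [support_neg]⟩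

omit [Fintype E] in
lemma injective_restrict_of_support_subset_compl {S : Set E}
    (hS : ∀ x ∈ W, support x ⊆ Sᶜ → x = 0) :
    Injective ((LinearMap.funLeft ℝ ℝ (Subtype.val : S → E)).comp W.subtype) := by
  rw [← LinearMap.ker_eq_bot, Submodule.eq_bot_iff]
  rintro ⟨x, hx⟩ hker
  refine Subtype.ext (hS x hx fun g hg hgS => hg ?_)
  exact congrFun (LinearMap.mem_ker.mp hker) ⟨g, hgS⟩

lemma exists_mem_apply_eq_one_support_subset_insert
    (hdim : Module.finrank ℝ W + Module.finrank ℝ W' = Fintype.card E)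
    (hA : ∀ x ∈ W, support x ⊆ A → x = 0) (hA' : ∀ x ∈ W', support x ⊆ Aᶜ → x = 0)
    (he : e ∉ A) : ∃ x ∈ W, x e = 1 ∧ support x ⊆ insert e A := by
  classical
  have hinj := injective_restrict_of_support_subset_compl (S := Aᶜ) (by rwa [compl_compl])
  have hinj' := injective_restrict_of_support_subset_compl (W := W') (S := A) hA'
  -- both restrictions are injective, so the dimension count makes the first one onto
  have hsurj := (LinearMap.injective_iff_surjective_of_finrank_eq_finrank (by
    have hle := LinearMap.finrank_le_finrank_of_injective hinj
    have hle' := LinearMap.finrank_le_finrank_of_injective hinj'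
    have hcard := Fintype.card_subtype_compl (· ∈ A)
    have hA_le := Fintype.card_subtype_le (· ∈ A)
    simp only [Module.finrank_fintype_fun_eq_card, Set.mem_compl_iff] at hle hle' hcard ⊢
    omega)).mp hinj
  obtain ⟨⟨x, hx⟩, hxe⟩ := hsurj (Pi.single (⟨e, he⟩ : ↥Aᶜ) 1)
  have hval : ∀ g (hg : g ∉ A), x g = (Pi.single (⟨e, he⟩ : ↥Aᶜ) 1 : ↥Aᶜ → ℝ) ⟨g, hg⟩ :=
    fun g hg => congrFun hxe ⟨g, hg⟩
  refine ⟨x, hx, by simpa using hval e he, fun g hg => ?_⟩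
  by_contra hgeA
  simp only [Set.mem_insert_iff, not_or] at hgeA
  exact hg (by rw [hval g hgeA.2, Pi.single_eq_of_ne fun h => hgeA.1 (congrArg Subtype.val h)])

lemma apply_eq_neg_apply_of_dotProduct_eq_zero {z w : E → ℝ} (horth : z ⬝ᵥ w = 0)
    (he : e ∉ A) (hf : f ∈ A) (hze : z e = 1) (hz : support z ⊆ insert e A)
    (hwf : w f = 1) (hw : support w ⊆ insert f Aᶜ) : z f = - w e := by
  have hef : e ≠ f := fun h => he (h ▸ hf)
  rw [dotProduct, Finset.sum_eq_add e f hef ?_ (by simp) (by simp), hze, hwf] at horth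
  · linarith
  · rintro g - ⟨hge, hgf⟩
    by_cases hgA : g ∈ A
    · rw [apply_eq_zero_of_support_subset_insert hw hgf (not_not.mpr hgA), mul_zero]
    · rw [apply_eq_zero_of_support_subset_insert hz hge hgA, zero_mul]

end SignedCircuits

/-- Gordan's alternative. -/
theorem exists_dual_forall_pos {ι V : Type*} [Fintype ι] [NormedAddCommGroup V]
    [NormedSpace ℝ V] (v : ι → V)
    (hv : ∀ a : ι → ℝ, (∀ i, 0 ≤ a i) → ∑ i, a i • v i = 0 → ∀ i, a i = 0) :
    ∃ φ : V →ₗ[ℝ] ℝ, ∀ i, 0 < φ (v i) := by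
  classical
  let L : (ι → ℝ) →ₗ[ℝ] V := Fintype.linearCombination ℝ v
  have h0 : (0 : V) ∉ L '' stdSimplex ℝ ι := by
    rintro ⟨a, ⟨ha0, ha1⟩, haL⟩
    have ha := hv a ha0 haL
    simp [ha] at ha1
  obtain ⟨φ, u, hφ0, hφ⟩ := geometric_hahn_banach_point_closed
    ((convex_stdSimplex ℝ ι).linear_image L)
    ((isCompact_stdSimplex ℝ ι).image L.continuous_of_finiteDimensional).isClosed h0
  refine ⟨φ.toLinearMap, fun i => ?_⟩
  rw [map_zero] at hφ0
  exact hφ0.trans (hφ (v i) ⟨Pi.single i 1, single_mem_stdSimplex ℝ i, by simp [L]⟩)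

lemma exists_dual_forall_pos_of_filter {α V : Type*} [Fintype α] [NormedAddCommGroup V]
    [NormedSpace ℝ V] {P : α → Prop} [DecidablePred P] (v : α → V)
    (hv : ∀ a : α → ℝ, (∀ C, 0 ≤ a C) → ∑ C ∈ Finset.univ.filter P, a C • v C = 0 →
      ∀ C, P C → a C = 0) :
    ∃ φ : V →ₗ[ℝ] ℝ, ∀ C, P C → 0 < φ (v C) := by
  obtain ⟨φ, hφ⟩ := exists_dual_forall_pos (fun C : Subtype P => v C) fun a ha hsum i => by
    have hext := hv (fun C => if h : P C then a ⟨C, h⟩ else 0)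
      (fun C => by split_ifs; exacts [ha _, le_rfl])
      (by
        rw [Finset.sum_subtype (Finset.univ.filter P) (p := P) (by simp)]
        simpa [Subtype.prop] using hsum) i.1 i.2
    simpa [i.2] using hext
  exact ⟨φ, fun C hC => hφ ⟨C, hC⟩⟩

lemma exists_mem_periodicPts {α : Type*} [Finite α] [Nonempty α] (f : α → α) :
    ∃ p, p ∈ periodicPts f := by
  obtain ⟨m, n, hmn, heq⟩ :=
    Finite.exists_ne_map_eq_of_infinite fun n => f^[n] (Classical.arbitrary α)
  wlog hlt : m < n generalizing m n
  · exact this n m hmn.symm heq.symm (by omega)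
  refine ⟨f^[m] (Classical.arbitrary α), mk_mem_periodicPts (n := n - m) (by omega) ?_⟩
  rw [IsPeriodicPt, IsFixedPt, ← iterate_add_apply, Nat.sub_add_cancel hlt.le, heq]

section Graph

variable {G : Graph} {x y : G.E → ℝ}

lemma mem_cycleSpace_iff : x ∈ cycleSpace G ↔ incMat G *ᵥ x = 0 := Iff.rfl

lemma incMat_transpose_mulVec_apply (u : G.V → ℝ) (e : G.E) :
    ((incMat G)ᵀ *ᵥ u) e = u (G.head e) - u (G.tail e) := by
  simp [Matrix.mulVec, dotProduct, incMat, sub_mul, Finset.sum_sub_distrib, ite_mul]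

lemma mem_cocycleSpace_iff :
    y ∈ cocycleSpace G ↔ ∃ u : G.V → ℝ, ∀ e, y e = u (G.head e) - u (G.tail e) := by
  constructor
  · rintro ⟨u, rfl⟩
    exact ⟨u, incMat_transpose_mulVec_apply u⟩
  · rintro ⟨u, hu⟩
    exact ⟨u, funext fun e => (incMat_transpose_mulVec_apply u e).trans (hu e).symm⟩

lemma dotProduct_eq_zero_of_mem_cycleSpace (hx : x ∈ cycleSpace G) (hy : y ∈ cocycleSpace G) :
    x ⬝ᵥ y = 0 := by
  obtain ⟨u, rfl⟩ := hy
  rw [Matrix.mulVecLin_apply, Matrix.dotProduct_mulVec, Matrix.vecMul_transpose,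
    mem_cycleSpace_iff.mp hx, zero_dotProduct]

lemma finrank_cycleSpace_add_finrank_cocycleSpace :
    Module.finrank ℝ (cycleSpace G) + Module.finrank ℝ (cocycleSpace G) = Fintype.card G.E := by
  have hrank := LinearMap.finrank_range_add_finrank_ker (DMap G)
  have htranspose :
      Module.finrank ℝ (cocycleSpace G) = Module.finrank ℝ (LinearMap.range (DMap G)) :=
    Matrix.rank_transpose (incMat G)
  rw [Module.finrank_fintype_fun_eq_card] at hrank
  rw [htranspose]
  exact (add_comm _ _).trans hrank

lemma hasSignVectorsBelow_cocycleSpace : HasSignVectorsBelow (cocycleSpace G) := by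
  intro y hy hy0
  obtain ⟨u, hu⟩ := mem_cocycleSpace_iff.mp hy
  obtain ⟨e₀, he₀⟩ : ∃ e, y e ≠ 0 := by
    by_contra! h
    exact hy0 (funext h)
  rw [hu, sub_ne_zero] at he₀
  -- the cut between the vertices of potential above and below the midpoint of `e₀`
  let t := (u (G.head e₀) + u (G.tail e₀)) / 2
  let χ : G.V → ℝ := fun v => if t < u v then 1 else 0
  refine ⟨fun e => χ (G.head e) - χ (G.tail e), mem_cocycleSpace_iff.mpr ⟨χ, fun _ => rfl⟩,
    fun h => ?_, fun e => ?_, fun e he => ?_⟩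
  · have h0 := congrFun h e₀
    rcases lt_or_gt_of_ne he₀ with hlt | hlt <;>
      simp only [χ, t, Pi.zero_apply] at h0 <;> split_ifs at h0 <;> linarith
  · simp only [χ]
    split_ifs <;> norm_num
  · rw [mem_support, hu, sub_ne_zero]
    intro heq
    exact he (by simp only [χ, heq, sub_self])

section Reorientation

variable (x)

noncomputable def orientSign (e : G.E) : ℝ := if 0 < x e then 1 else -1

noncomputable def orientHead (e : G.E) : G.V := if 0 < x e then G.head e else G.tail e

noncomputable def orientTail (e : G.E) : G.V := if 0 < x e then G.tail e else G.head e

lemma abs_mul_orientSign (e : G.E) : |x e| * orientSign x e = x e := by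
  unfold orientSign
  split_ifs with h
  · rw [abs_of_pos h, mul_one]
  · rw [abs_of_nonpos (not_lt.mp h), mul_neg_one, neg_neg]

lemma incMat_mul_orientSign (v : G.V) (e : G.E) :
    incMat G v e * orientSign x e =
      (if orientHead x e = v then 1 else 0) - (if orientTail x e = v then 1 else 0) := by
  unfold incMat orientSign orientHead orientTail
  split_ifs <;> ring

end Reorientation

lemma exists_orientTail_eq_orientHead (hx : x ∈ cycleSpace G) {e : G.E} (he : x e ≠ 0) :
    ∃ e', x e' ≠ 0 ∧ orientTail x e' = orientHead x e := by
  -- otherwise the net flow of `x` into `orientHead x e` would be positive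
  by_contra! hout
  set v := orientHead x e
  have hflow : ∑ g, |x g| * ((if orientHead x g = v then 1 else 0) -
      (if orientTail x g = v then 1 else 0)) = 0 := by
    calc _ = ∑ g, incMat G v g * x g := Finset.sum_congr rfl fun g _ => by
            rw [← incMat_mul_orientSign]
            linear_combination incMat G v g * abs_mul_orientSign x g
      _ = (incMat G *ᵥ x) v := rfl
      _ = 0 := by rw [mem_cycleSpace_iff.mp hx, Pi.zero_apply]
  refine hflow.not_gt (Finset.sum_pos' (fun g _ => ?_) ⟨e, Finset.mem_univ _, ?_⟩)
  · by_cases hg : x g = 0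
    · simp [hg]
    · rw [if_neg (hout g hg)]
      split_ifs <;> simp
  · rw [if_pos rfl, if_neg (hout e he), sub_zero, mul_one]
    exact abs_pos.mpr he

lemma ite_mem_map_orientSign_mem_cycleSpace [DecidableEq G.E] {P : Finset {e // x e ≠ 0}}
    {next : {e // x e ≠ 0} → {e // x e ≠ 0}} (hP : Set.BijOn next P P)
    (hnext : ∀ p, orientTail x (next p) = orientHead x p) :
    (fun e => if e ∈ P.map (Embedding.subtype _) then orientSign x e else 0) ∈ cycleSpace G := by
  refine mem_cycleSpace_iff.mpr (funext fun v => ?_)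
  calc _ = ∑ e ∈ P.map (Embedding.subtype _), incMat G v e * orientSign x e := by
        simp only [mulVec, dotProduct, mul_ite, mul_zero]
        rw [Finset.sum_ite_mem, Finset.univ_inter]
    _ = ∑ p ∈ P, (if orientTail x (next p) = v then 1 else 0) -
          ∑ p ∈ P, (if orientTail x p = v then 1 else 0) := by
        rw [Finset.sum_map, ← Finset.sum_sub_distrib]
        refine Finset.sum_congr rfl fun p _ => ?_
        rw [incMat_mul_orientSign, hnext]
        rfl
    _ = 0 := by
        rw [sub_eq_zero]
        exact Finset.sum_nbij next (fun p hp => hP.mapsTo hp) hP.injOn hP.surjOn fun _ _ => rfl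

lemma hasSignVectorsBelow_cycleSpace : HasSignVectorsBelow (cycleSpace G) := by
  classical
  intro x hx hx0
  obtain ⟨e₀, he₀⟩ : ∃ e, x e ≠ 0 := by
    by_contra! h
    exact hx0 (funext h)
  have : Nonempty {e // x e ≠ 0} := ⟨⟨e₀, he₀⟩⟩
  have hstep : ∀ p : {e // x e ≠ 0}, ∃ q : {e // x e ≠ 0}, orientTail x q = orientHead x p :=
    fun p => let ⟨e, he, h⟩ := exists_orientTail_eq_orientHead hx p.2; ⟨⟨e, he⟩, h⟩
  choose next hnext using hstep
  -- `next` permutes its periodic points, so their signed indicator is conserved at every vertex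
  let P := (periodicPts next).toFinset
  have hP : Set.BijOn next P P := by
    rw [Set.coe_toFinset]
    exact bijOn_periodicPts next
  obtain ⟨p₀, hp₀⟩ := exists_mem_periodicPts next
  have hp₀P : p₀.1 ∈ P.map (Embedding.subtype _) :=
    Finset.mem_map_of_mem _ (Set.mem_toFinset.mpr hp₀)
  refine ⟨_, ite_mem_map_orientSign_mem_cycleSpace hP hnext, fun h => ?_, fun e => ?_,
    fun e he => ?_⟩
  · have hc := congrFun h p₀.1
    simp only [if_pos hp₀P, orientSign, Pi.zero_apply] at hc
    split_ifs at hc <;> norm_num at hc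
  · simp only [orientSign]
    split_ifs <;> norm_num
  · by_contra hxe
    refine he (if_neg fun heP => hxe ?_)
    obtain ⟨p, -, rfl⟩ := Finset.mem_map.mp heP
    exact p.2

end Graph

section SpanningTree

variable {G : Graph} {T T₁ T₂ : Finset G.E} {e f : G.E} {x : G.E → ℝ}

lemma IsSpanningTree.eq_zero_of_mem_cycleSpace (hT : IsSpanningTree G T)
    (hx : x ∈ cycleSpace G) (hxT : support x ⊆ ↑T) : x = 0 :=
  eq_zero_of_support_subset hasSignVectorsBelow_cycleSpace hT.1 hx hxT

lemma IsSpanningTree.eq_zero_of_mem_cocycleSpace (hT : IsSpanningTree G T)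
    (hx : x ∈ cocycleSpace G) (hxT : support x ⊆ (↑T)ᶜ) : x = 0 :=
  eq_zero_of_support_subset hasSignVectorsBelow_cocycleSpace hT.2 hx hxT

lemma IsSpanningTree.exists_fundCycle (hT : IsSpanningTree G T) (he : e ∉ T) :
    ∃ z, FundCycle G T e z := by
  obtain ⟨x, hx, hxe, hxT⟩ := exists_mem_apply_eq_one_support_subset_insert
    finrank_cycleSpace_add_finrank_cocycleSpace (fun _ => hT.eq_zero_of_mem_cycleSpace)
    (fun _ => hT.eq_zero_of_mem_cocycleSpace) (show e ∉ (↑T : Set G.E) from he)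
  exact exists_isSignedCircuit_apply_eq_one hasSignVectorsBelow_cycleSpace hT.1 hx
    (by simp [hxe]) hxT

lemma IsSpanningTree.exists_fundCocycle (hT : IsSpanningTree G T) (he : e ∈ T) :
    ∃ z, FundCocycle G T e z := by
  obtain ⟨x, hx, hxe, hxT⟩ := exists_mem_apply_eq_one_support_subset_insert
    ((add_comm _ _).trans finrank_cycleSpace_add_finrank_cocycleSpace)
    (fun _ => hT.eq_zero_of_mem_cocycleSpace)
    (fun x hx hxT => hT.eq_zero_of_mem_cycleSpace hx (by rwa [compl_compl] at hxT))
    (show e ∉ (↑T : Set G.E)ᶜ from not_not.mpr he)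
  exact exists_isSignedCircuit_apply_eq_one hasSignVectorsBelow_cocycleSpace hT.2 hx
    (by simp [hxe]) hxT

open Classical in
noncomputable def fundCycle (T : Finset G.E) (e : G.E) : G.E → ℝ :=
  if h : ∃ z, FundCycle G T e z then h.choose else 0

open Classical in
noncomputable def fundCocycle (T : Finset G.E) (e : G.E) : G.E → ℝ :=
  if h : ∃ z, FundCocycle G T e z then h.choose else 0

lemma IsSpanningTree.fundCycle_spec (hT : IsSpanningTree G T) (he : e ∉ T) :
    FundCycle G T e (fundCycle T e) := by
  rw [fundCycle, dif_pos (hT.exists_fundCycle he)]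
  exact (hT.exists_fundCycle he).choose_spec

lemma IsSpanningTree.fundCocycle_spec (hT : IsSpanningTree G T) (he : e ∈ T) :
    FundCocycle G T e (fundCocycle T e) := by
  rw [fundCocycle, dif_pos (hT.exists_fundCocycle he)]
  exact (hT.exists_fundCocycle he).choose_spec

variable {σc : CycSig G} {σs : CocycSig G} {O O₁ O₂ : G.E → ℝ}

lemma GOrient.cycSig_fundCycle (hO : GOrient G σc σs T O) (hT : IsSpanningTree G T)
    (he : e ∉ T) : σc.s (support (fundCycle T e)) = dir G O e • fundCycle T e := by
  have hz := hT.fundCycle_spec he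
  obtain ⟨hσ, hσsupp⟩ := σc.mem _ ⟨_, hz.1, rfl⟩
  rw [hO.2.1 e he _ hz]
  exact eq_apply_smul_of_support_subset_insert (fun _ => hT.eq_zero_of_mem_cycleSpace)
    hz.1.1 hz.2.1 hz.2.2 hσ.1 (hσsupp.symm ▸ hz.2.2)

lemma GOrient.cocycSig_fundCocycle (hO : GOrient G σc σs T O) (hT : IsSpanningTree G T)
    (he : e ∈ T) : σs.s (support (fundCocycle T e)) = dir G O e • fundCocycle T e := by
  have hz := hT.fundCocycle_spec he
  obtain ⟨hσ, hσsupp⟩ := σs.mem _ ⟨_, hz.1, rfl⟩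
  rw [hO.2.2 e he _ hz]
  exact eq_apply_smul_of_support_subset_insert (fun _ => hT.eq_zero_of_mem_cocycleSpace)
    hz.1.1 hz.2.1 hz.2.2 hσ.1 (hσsupp.symm ▸ hz.2.2)

lemma dir_mul_self (hO : IsOrientation G O) (e : G.E) : dir G O e * dir G O e = 1 := by
  rcases hO e with h | h <;> norm_num [dir, h]

lemma fundCycle_mul_fundCocycle_pos (hT₁ : IsSpanningTree G T₁) (hT₂ : IsSpanningTree G T₂)
    (hO₁ : GOrient G σc σs T₁ O₁) (hO₂ : GOrient G σc σs T₂ O₂) (he₁ : e ∉ T₁) (he₂ : e ∈ T₂)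
    (hOe : O₁ e = O₂ e) {a b : (G.E → ℝ) →ₗ[ℝ] ℝ} (ha : ∀ C, IsCycle G C → 0 < a (σc.s C))
    (hb : ∀ C, IsCocycle G C → 0 < b (σs.s C)) :
    0 < a (fundCycle T₁ e) * b (fundCocycle T₂ e) := by
  have h₁ := ha _ ⟨_, (hT₁.fundCycle_spec he₁).1, rfl⟩
  have h₂ := hb _ ⟨_, (hT₂.fundCocycle_spec he₂).1, rfl⟩
  have hdir : dir G O₂ e = dir G O₁ e := by rw [dir, dir, hOe]
  rw [hO₁.cycSig_fundCycle hT₁ he₁, map_smul, smul_eq_mul] at h₁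
  rw [hO₂.cocycSig_fundCocycle hT₂ he₂, map_smul, smul_eq_mul, hdir] at h₂
  simpa only [mul_mul_mul_comm, dir_mul_self hO₁.1, one_mul] using mul_pos h₁ h₂

lemma map_fundCocycle_eq_sum (hT₁ : IsSpanningTree G T₁) (hT₂ : IsSpanningTree G T₂)
    (b : (G.E → ℝ) →ₗ[ℝ] ℝ) (he₂ : e ∈ T₂) (he₁ : e ∉ T₁) :
    b (fundCocycle T₂ e) = ∑ f ∈ T₁ \ T₂, fundCocycle T₂ e f * b (fundCocycle T₁ f) := by
  have hw := hT₂.fundCocycle_spec he₂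
  have hexp := eq_sum_smul_of_support_subset (D := T₁ \ T₂)
    (fun _ => hT₁.eq_zero_of_mem_cocycleSpace) (fun f hf => by
      have hf := hT₁.fundCocycle_spec (Finset.mem_sdiff.mp hf).1
      exact ⟨hf.1.1, hf.2⟩) hw.1.1 (fun g hg => ?_)
  · conv_lhs => rw [hexp]
    simp only [map_sum, map_smul, smul_eq_mul]
  · rcases hw.2.2 hg with rfl | hg₂
    · exact Or.inr he₁
    · by_cases hg₁ : g ∈ T₁
      · exact Or.inl (Finset.mem_sdiff.mpr ⟨hg₁, hg₂⟩)
      · exact Or.inr hg₁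

lemma map_fundCycle_eq_sum (hT₁ : IsSpanningTree G T₁) (hT₂ : IsSpanningTree G T₂)
    (a : (G.E → ℝ) →ₗ[ℝ] ℝ) (hf₁ : f ∈ T₁) (hf₂ : f ∉ T₂) :
    a (fundCycle T₂ f) = ∑ e ∈ T₂ \ T₁, fundCycle T₂ f e * a (fundCycle T₁ e) := by
  have hz := hT₂.fundCycle_spec hf₂
  have hexp := eq_sum_smul_of_support_subset (D := T₂ \ T₁)
    (fun _ => hT₁.eq_zero_of_mem_cycleSpace) (fun e he => by
      have he := hT₁.fundCycle_spec (Finset.mem_sdiff.mp he).2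
      exact ⟨he.1.1, he.2⟩) hz.1.1 (fun g hg => ?_)
  · conv_lhs => rw [hexp]
    simp only [map_sum, map_smul, smul_eq_mul]
  · rcases hz.2.2 hg with rfl | hg₂
    · exact Or.inr hf₁
    · by_cases hg₁ : g ∈ T₁
      · exact Or.inr hg₁
      · exact Or.inl (Finset.mem_sdiff.mpr ⟨hg₂, hg₁⟩)

lemma fundCycle_apply_eq_neg_fundCocycle_apply (hT : IsSpanningTree G T) (he : e ∈ T)
    (hf : f ∉ T) : fundCycle T f e = - fundCocycle T e f := by
  have hz := hT.fundCycle_spec hf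
  have hw := hT.fundCocycle_spec he
  exact apply_eq_neg_apply_of_dotProduct_eq_zero
    (dotProduct_eq_zero_of_mem_cycleSpace hz.1.1 hw.1.1) hf he hz.2.1 hz.2.2 hw.2.1 hw.2.2

lemma sum_fundCycle_mul_fundCocycle_add_sum_eq_zero (hT₁ : IsSpanningTree G T₁)
    (hT₂ : IsSpanningTree G T₂) (a b : (G.E → ℝ) →ₗ[ℝ] ℝ) :
    ∑ e ∈ T₂ \ T₁, a (fundCycle T₁ e) * b (fundCocycle T₂ e) +
      ∑ f ∈ T₁ \ T₂, a (fundCycle T₂ f) * b (fundCocycle T₁ f) = 0 := by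
  have h₁ : ∑ e ∈ T₂ \ T₁, a (fundCycle T₁ e) * b (fundCocycle T₂ e) = ∑ e ∈ T₂ \ T₁,
      ∑ f ∈ T₁ \ T₂, a (fundCycle T₁ e) * (fundCocycle T₂ e f * b (fundCocycle T₁ f)) :=
    Finset.sum_congr rfl fun e he => by
      rw [map_fundCocycle_eq_sum hT₁ hT₂ b (Finset.mem_sdiff.mp he).1
        (Finset.mem_sdiff.mp he).2, Finset.mul_sum]
  have h₂ : ∑ f ∈ T₁ \ T₂, a (fundCycle T₂ f) * b (fundCocycle T₁ f) = ∑ e ∈ T₂ \ T₁,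
      ∑ f ∈ T₁ \ T₂, fundCycle T₂ f e * a (fundCycle T₁ e) * b (fundCocycle T₁ f) := by
    rw [Finset.sum_comm]
    exact Finset.sum_congr rfl fun f hf => by
      rw [map_fundCycle_eq_sum hT₁ hT₂ a (Finset.mem_sdiff.mp hf).1
        (Finset.mem_sdiff.mp hf).2, Finset.sum_mul]
  rw [h₁, h₂, ← Finset.sum_add_distrib]
  refine Finset.sum_eq_zero fun e he => ?_
  rw [← Finset.sum_add_distrib]
  refine Finset.sum_eq_zero fun f hf => ?_
  rw [fundCycle_apply_eq_neg_fundCocycle_apply hT₂ (Finset.mem_sdiff.mp he).1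
    (Finset.mem_sdiff.mp hf).2]
  ring

end SpanningTree

end GB

open GB in
theorem stmt_9_general (G : GB.Graph)
    (σc : GB.CycSig G) (σs : GB.CocycSig G)
    (hac : GB.AcyclicSig G σc) (hacs : GB.AcyclicCosig G σs)
    (T₁ T₂ : Finset G.E) (hT₁ : GB.IsSpanningTree G T₁) (hT₂ : GB.IsSpanningTree G T₂)
    (hne : T₁ ≠ T₂)
    (O₁ O₂ : G.E → ℝ) (hO₁ : GB.GOrient G σc σs T₁ O₁) (hO₂ : GB.GOrient G σc σs T₂ O₂) :
    ∃ e : G.E, ((e ∈ T₁ ∧ e ∉ T₂) ∨ (e ∈ T₂ ∧ e ∉ T₁)) ∧ O₁ e ≠ O₂ e := by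
  classical
  by_contra! hsame
  obtain ⟨a, ha⟩ := exists_dual_forall_pos_of_filter σc.s hac
  obtain ⟨b, hb⟩ := exists_dual_forall_pos_of_filter σs.s hacs
  have hpos₁ : ∀ e ∈ T₂ \ T₁, 0 < a (fundCycle T₁ e) * b (fundCocycle T₂ e) := fun e he =>
    have ⟨he₂, he₁⟩ := Finset.mem_sdiff.mp he
    fundCycle_mul_fundCocycle_pos hT₁ hT₂ hO₁ hO₂ he₁ he₂ (hsame e (Or.inr ⟨he₂, he₁⟩)) ha hb
  have hpos₂ : ∀ f ∈ T₁ \ T₂, 0 < a (fundCycle T₂ f) * b (fundCocycle T₁ f) := fun f hf =>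
    have ⟨hf₁, hf₂⟩ := Finset.mem_sdiff.mp hf
    fundCycle_mul_fundCocycle_pos hT₂ hT₁ hO₂ hO₁ hf₂ hf₁ (hsame f (Or.inl ⟨hf₁, hf₂⟩)).symm ha hb
  have hzero := sum_fundCycle_mul_fundCocycle_add_sum_eq_zero hT₁ hT₂ a b
  have hnonneg₁ := Finset.sum_nonneg fun e he => (hpos₁ e he).le
  have hnonneg₂ := Finset.sum_nonneg fun f hf => (hpos₂ f hf).le
  rcases (T₂ \ T₁).eq_empty_or_nonempty with h | h
  · have hsub : (T₁ \ T₂).Nonempty := Finset.sdiff_nonempty.mpr fun h' =>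
      hne (h'.antisymm (Finset.sdiff_eq_empty_iff_subset.mp h))
    linarith [Finset.sum_pos hpos₂ hsub]
  · linarith [Finset.sum_pos hpos₁ h]

open GB in
theorem stmt_9 (G : GB.Graph) (hconn : GB.Connected G)
    (σc : GB.CycSig G) (σs : GB.CocycSig G)
    (hac : GB.AcyclicSig G σc) (hacs : GB.AcyclicCosig G σs)
    (T₁ T₂ : Finset G.E) (hT₁ : GB.IsSpanningTree G T₁) (hT₂ : GB.IsSpanningTree G T₂)
    (hne : T₁ ≠ T₂)
    (O₁ O₂ : G.E → ℝ) (hO₁ : GB.GOrient G σc σs T₁ O₁) (hO₂ : GB.GOrient G σc σs T₂ O₂) :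
    ∃ e : G.E, ((e ∈ T₁ ∧ e ∉ T₂) ∨ (e ∈ T₂ ∧ e ∉ T₁)) ∧ O₁ e ≠ O₂ e :=
  stmt_9_general G σc σs hac hacs T₁ T₂ hT₁ hT₂ hne O₁ O₂ hO₁ hO₂
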